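/- arXiv:2402.11769 — 2 statements merged into one kernel-verified Lean document; each statement's English description precedes it below -/
import Mathlib

section
/- Let F : ℝⁿ → ℝ be differentiable with L-Lipschitz gradient, bounded below by F* > -∞. Consider iterates λ^(k) produced by block-coordinate gradient descent: at each iteration k a coordinate set S_k is chosen and λ^(k)ᵢ = λ^(k-1)ᵢ - ρ(∇F(λ^(k-1)))ᵢ for i ∈ S_k, unchanged otherwise, with 0 < ρ < 2/L. Assume every coordinate i appears in S_k at least once in every window of k̄ < ∞ consecutive iterations. Then ∇F(λ^(k)) → 0 as k → ∞. -/
open Filter InnerProductSpace RealInnerProductSpace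

theorem lineDeriv' {E : Type*} [NormedAddCommGroup E] [InnerProductSpace ℝ E] [CompleteSpace E]
    (F : E → ℝ) (hdiff : Differentiable ℝ F) (x d : E) (t : ℝ) :
    HasDerivAt (fun s : ℝ => F (x + s • d)) ⟪gradient F (x + t • d), d⟫_ℝ t := by
  have hline : HasDerivAt (fun s : ℝ => x + s • d) d t := by
    simpa using ((hasDerivAt_id t).smul_const d).const_add x
  have hF := ((hdiff (x + t • d)).hasGradientAt).hasFDerivAt
  simpa [Function.comp_def] using hF.comp_hasDerivAt t hline

theorem descent' {E : Type*} [NormedAddCommGroup E] [InnerProductSpace ℝ E] [CompleteSpace E]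
    (F : E → ℝ) (L : ℝ) (hdiff : Differentiable ℝ F)
    (hlip : ∀ x y, ‖gradient F x - gradient F y‖ ≤ L * ‖x - y‖) (x y : E) :
    F y ≤ F x + ⟪gradient F x, y - x⟫_ℝ + L / 2 * ‖y - x‖ ^ 2 := by
  set d := y - x with hd
  set φ : ℝ → ℝ := fun t => F (x + t • d) - t * ⟪gradient F x, d⟫_ℝ - L / 2 * t ^ 2 * ‖d‖ ^ 2
    with hφdef
  have hφ : ∀ t : ℝ, HasDerivAt φ
      (⟪gradient F (x + t • d), d⟫_ℝ - ⟪gradient F x, d⟫_ℝ - L * t * ‖d‖ ^ 2) t := by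
    intro t
    have h1 := lineDeriv' F hdiff x d t
    have h2 : HasDerivAt (fun s : ℝ => s * ⟪gradient F x, d⟫_ℝ) ⟪gradient F x, d⟫_ℝ t := by
      simpa using (hasDerivAt_id t).mul_const ⟪gradient F x, d⟫_ℝ
    have h3 : HasDerivAt (fun s : ℝ => L / 2 * s ^ 2 * ‖d‖ ^ 2) (L * t * ‖d‖ ^ 2) t := by
      have := ((hasDerivAt_pow 2 t).const_mul (L / 2)).mul_const (‖d‖ ^ 2)
      refine this.congr_deriv ?_
      ring
    exact (h1.sub h2).sub h3
  have hanti : AntitoneOn φ (Set.Icc 0 1) := by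
    apply antitoneOn_of_deriv_nonpos (convex_Icc 0 1)
    · exact Continuous.continuousOn (by
        have : Differentiable ℝ φ := fun t => (hφ t).differentiableAt
        exact this.continuous)
    · intro t _
      exact ((hφ t).differentiableAt).differentiableWithinAt
    · intro t ht
      rw [interior_Icc] at ht
      rw [(hφ t).deriv]
      have key : ⟪gradient F (x + t • d), d⟫_ℝ - ⟪gradient F x, d⟫_ℝ ≤ L * t * ‖d‖ ^ 2 := by
        rw [← inner_sub_left]
        calc ⟪gradient F (x + t • d) - gradient F x, d⟫_ℝ
            ≤ ‖gradient F (x + t • d) - gradient F x‖ * ‖d‖ := real_inner_le_norm _ _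
          _ ≤ L * ‖(x + t • d) - x‖ * ‖d‖ := by
              apply mul_le_mul_of_nonneg_right (hlip _ _) (norm_nonneg _)
          _ = L * t * ‖d‖ ^ 2 := by
              rw [add_sub_cancel_left, norm_smul, Real.norm_eq_abs, abs_of_pos ht.1]
              ring
      linarith
  have h01 := hanti (Set.mem_Icc.2 ⟨le_refl 0, zero_le_one⟩)
    (Set.mem_Icc.2 ⟨zero_le_one, le_refl 1⟩) zero_le_one
  have e0 : φ 0 = F x := by simp [hφdef]
  have e1 : φ 1 = F y - ⟪gradient F x, d⟫_ℝ - L / 2 * ‖d‖ ^ 2 := by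
    simp [hφdef, hd]
  rw [e0, e1] at h01
  linarith

theorem coord_le_norm' {n : ℕ} (x : EuclideanSpace ℝ (Fin n)) (i : Fin n) : |x i| ≤ ‖x‖ := by
  rw [EuclideanSpace.norm_eq, ← Real.sqrt_sq_eq_abs]
  apply Real.sqrt_le_sqrt
  have := Finset.single_le_sum (f := fun j => ‖x j‖ ^ 2)
    (fun j _ => by positivity) (Finset.mem_univ i)
  simpa [sq_abs] using this

theorem norm_le_l1' {n : ℕ} (x : EuclideanSpace ℝ (Fin n)) : ‖x‖ ≤ ∑ i, |x i| := by
  rw [EuclideanSpace.norm_eq]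
  have h : ∑ j, ‖x j‖ ^ 2 ≤ (∑ i, |x i|) ^ 2 := by
    rw [sq (∑ i, |x i|), Finset.sum_mul]
    apply Finset.sum_le_sum
    intro j _
    have h1 : |x j| ≤ ∑ i, |x i| :=
      Finset.single_le_sum (f := fun i => |x i|) (fun i _ => abs_nonneg _) (Finset.mem_univ j)
    calc ‖x j‖ ^ 2 = |x j| * |x j| := by rw [Real.norm_eq_abs, sq]
      _ ≤ |x j| * ∑ i, |x i| := mul_le_mul_of_nonneg_left h1 (abs_nonneg _)
  calc Real.sqrt (∑ j, ‖x j‖ ^ 2) ≤ Real.sqrt ((∑ i, |x i|) ^ 2) := Real.sqrt_le_sqrt h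
    _ = ∑ i, |x i| := Real.sqrt_sq (by positivity)

theorem euclid_inner' {n : ℕ} (x y : EuclideanSpace ℝ (Fin n)) :
    ⟪x, y⟫_ℝ = ∑ i, x i * y i := by
  simp [PiLp.inner_apply, RCLike.inner_apply, conj_trivial]
  exact Finset.sum_congr rfl fun i _ => mul_comm _ _

theorem stmt3 {n : ℕ} (F : EuclideanSpace ℝ (Fin n) → ℝ) (L ρ Fstar : ℝ)
    (hdiff : Differentiable ℝ F)
    (hlip : ∀ x y, ‖gradient F x - gradient F y‖ ≤ L * ‖x - y‖)
    (hρ : 0 < ρ) (hρ2 : ρ < 2 / L)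
    (hbdd : ∀ x, Fstar ≤ F x)
    (lam : ℕ → EuclideanSpace ℝ (Fin n)) (S : ℕ → Finset (Fin n))
    (kbar : ℕ) (hkbar : 0 < kbar)
    (hupd : ∀ k, ∀ i, lam (k + 1) i =
      if i ∈ S (k + 1) then lam k i - ρ * gradient F (lam k) i else lam k i)
    (hwin : ∀ i : Fin n, ∀ k : ℕ, ∃ k' ∈ Finset.Ico k (k + kbar), i ∈ S k') :
    Filter.Tendsto (fun k => gradient F (lam k)) Filter.atTop (nhds 0) := by
  -- L is positive
  have hL : 0 < L := by
    by_contra h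
    push_neg at h
    have : 2 / L ≤ 0 := by
      rcases lt_or_eq_of_le h with h' | h'
      · exact le_of_lt (div_neg_of_pos_of_neg two_pos h')
      · rw [h']; norm_num
    linarith
  set g : ℕ → EuclideanSpace ℝ (Fin n) := fun k => gradient F (lam k) with hg
  set Q : ℕ → ℝ := fun k => ∑ i ∈ S (k + 1), (g k i) ^ 2 with hQ
  have hQ0 : ∀ k, 0 ≤ Q k := fun k => Finset.sum_nonneg fun i _ => sq_nonneg _
  set c : ℝ := ρ - L * ρ ^ 2 / 2 with hc
  have hρL : ρ * L < 2 := (lt_div_iff₀ hL).mp hρ2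
  have hcpos : 0 < c := by
    rw [hc]
    nlinarith [mul_pos hρ (sub_pos.2 hρL)]
  -- difference vector coordinates
  have hdk : ∀ k (i : Fin n), (lam (k + 1) - lam k) i =
      if i ∈ S (k + 1) then -(ρ * g k i) else 0 := by
    intro k i
    show lam (k + 1) i - lam k i = _
    rw [hupd k i]
    split <;> ring
  have hinner : ∀ k, ⟪g k, lam (k + 1) - lam k⟫_ℝ = -(ρ * Q k) := by
    intro k
    rw [euclid_inner']
    have : ∀ i : Fin n, g k i * (lam (k + 1) - lam k) i =
        if i ∈ S (k + 1) then -(ρ * (g k i) ^ 2) else 0 := by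
      intro i
      rw [hdk k i]
      split <;> ring
    rw [Finset.sum_congr rfl fun i _ => this i]
    rw [Finset.sum_ite_mem, Finset.univ_inter]
    show _ = -(ρ * ∑ i ∈ S (k + 1), g k i ^ 2)
    rw [Finset.sum_neg_distrib, Finset.mul_sum]
  have hnormsq : ∀ k, ‖lam (k + 1) - lam k‖ ^ 2 = ρ ^ 2 * Q k := by
    intro k
    rw [← real_inner_self_eq_norm_sq, euclid_inner']
    have : ∀ i : Fin n, (lam (k + 1) - lam k) i * (lam (k + 1) - lam k) i =
        if i ∈ S (k + 1) then ρ ^ 2 * (g k i) ^ 2 else 0 := by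
      intro i
      rw [hdk k i]
      split <;> ring
    rw [Finset.sum_congr rfl fun i _ => this i]
    rw [Finset.sum_ite_mem, Finset.univ_inter]
    show _ = ρ ^ 2 * ∑ i ∈ S (k + 1), g k i ^ 2
    rw [Finset.mul_sum]
  -- per-step decrease
  have hdec : ∀ k, F (lam (k + 1)) ≤ F (lam k) - c * Q k := by
    intro k
    have := descent' F L hdiff hlip (lam k) (lam (k + 1))
    rw [hinner k, hnormsq k] at this
    have e : F (lam k) + -(ρ * Q k) + L / 2 * (ρ ^ 2 * Q k)
        = F (lam k) - c * Q k := by rw [hc]; ring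
    rw [e] at this
    exact this
  -- F (lam k) is antitone and bounded below, hence converges
  have hanti : Antitone fun k => F (lam k) := by
    apply antitone_nat_of_succ_le
    intro k
    have h1 := hdec k
    nlinarith [mul_nonneg hcpos.le (hQ0 k)]
  have hbb : BddBelow (Set.range fun k => F (lam k)) := by
    refine ⟨Fstar, ?_⟩
    rintro x ⟨k, rfl⟩
    exact hbdd _
  have hFlim : Tendsto (fun k => F (lam k)) atTop (nhds (⨅ k, F (lam k))) :=
    tendsto_atTop_ciInf hanti hbb
  have hFlim1 : Tendsto (fun k => F (lam (k + 1))) atTop (nhds (⨅ k, F (lam k))) :=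
    hFlim.comp (tendsto_add_atTop_nat 1)
  have hdiff0 : Tendsto (fun k => F (lam k) - F (lam (k + 1))) atTop (nhds 0) := by
    have := hFlim.sub hFlim1
    simpa using this
  have hcQ : Tendsto (fun k => c * Q k) atTop (nhds 0) :=
    squeeze_zero (fun k => mul_nonneg hcpos.le (hQ0 k))
      (fun k => by linarith [hdec k]) hdiff0
  have hQlim : Tendsto Q atTop (nhds 0) := by
    have h2 := hcQ.const_mul c⁻¹
    simp only [mul_zero] at h2
    have he : (fun k => c⁻¹ * (c * Q k)) = Q := by
      funext k
      field_simp
    rwa [he] at h2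
  have hstep : Tendsto (fun k => ‖lam (k + 1) - lam k‖) atTop (nhds 0) := by
    have h1 : Tendsto (fun k => ρ ^ 2 * Q k) atTop (nhds 0) := by
      simpa using hQlim.const_mul (ρ ^ 2)
    have h2 : Tendsto (fun k => Real.sqrt (ρ ^ 2 * Q k)) atTop (nhds 0) := by
      have := (Real.continuous_sqrt.tendsto 0).comp h1
      simpa [Function.comp_def] using this
    have he : (fun k => ‖lam (k + 1) - lam k‖) = fun k => Real.sqrt (ρ ^ 2 * Q k) := by
      funext k
      rw [← hnormsq k, Real.sqrt_sq (norm_nonneg _)]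
    rwa [he]
  have hcoord : ∀ i : Fin n, Tendsto (fun k => g k i) atTop (nhds 0) := by
    intro i
    rw [Metric.tendsto_atTop]
    intro ε hε
    have hden : (0:ℝ) < L * kbar + 1 := by positivity
    set δ : ℝ := ε / 2 / (L * kbar + 1) with hδ
    have hδpos : 0 < δ := by positivity
    obtain ⟨N1, hN1⟩ := (Metric.tendsto_atTop.mp hQlim) ((ε/2)^2) (by positivity)
    obtain ⟨N2, hN2⟩ := (Metric.tendsto_atTop.mp hstep) δ hδpos
    refine ⟨max N1 N2, fun k hk => ?_⟩
    obtain ⟨k', hk'mem, hk'S⟩ := hwin i (k + 1)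
    rw [Finset.mem_Ico] at hk'mem
    obtain ⟨t, rfl⟩ := Nat.exists_eq_add_of_le hk'mem.1
    set m := k + t with hm
    have hiS : i ∈ S (m + 1) := by
      have he : k + 1 + t = m + 1 := by omega
      rwa [he] at hk'S
    have htb : t < kbar := by omega
    have hQm : Q m < (ε/2)^2 := by
      have h := hN1 m (le_trans (le_max_left N1 N2)
        (le_trans hk (Nat.le_add_right k t)))
      rwa [Real.dist_eq, sub_zero, abs_of_nonneg (hQ0 m)] at h
    have hgmi : |g m i| < ε/2 := by
      have h1 : (g m i)^2 ≤ Q m :=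
        Finset.single_le_sum (f := fun j => (g m j)^2) (fun j _ => sq_nonneg _) hiS
      rw [← Real.sqrt_sq_eq_abs]
      calc Real.sqrt ((g m i)^2) ≤ Real.sqrt (Q m) := Real.sqrt_le_sqrt h1
        _ < Real.sqrt ((ε/2)^2) := Real.sqrt_lt_sqrt (hQ0 m) hQm
        _ = ε/2 := Real.sqrt_sq (by positivity)
    have hmove : dist (lam k) (lam m) ≤ t * δ := by
      calc dist (lam k) (lam m) ≤ ∑ j ∈ Finset.Ico k m, dist (lam j) (lam (j + 1)) :=
            dist_le_Ico_sum_dist lam (Nat.le_add_right k t)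
        _ ≤ ∑ _j ∈ Finset.Ico k m, δ := by
            apply Finset.sum_le_sum
            intro j hj
            rw [Finset.mem_Ico] at hj
            have h := hN2 j (le_trans (le_max_right N1 N2) (le_trans hk hj.1))
            rw [Real.dist_eq, sub_zero, abs_of_nonneg (norm_nonneg _)] at h
            rw [dist_eq_norm, norm_sub_rev]
            exact le_of_lt h
        _ = t * δ := by
            have hmk : m - k = t := by omega
            rw [Finset.sum_const, Nat.card_Ico, hmk, nsmul_eq_mul]
    have hgdiff : |g k i - g m i| ≤ L * (t * δ) := by
      have h1 : |(g k - g m) i| ≤ ‖g k - g m‖ := coord_le_norm' _ i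
      have h4 : (g k - g m) i = g k i - g m i := rfl
      rw [h4] at h1
      have h2 : ‖g k - g m‖ ≤ L * ‖lam k - lam m‖ := hlip _ _
      have h3 : ‖lam k - lam m‖ ≤ t * δ := by
        rw [← dist_eq_norm]; exact hmove
      calc |g k i - g m i| ≤ L * ‖lam k - lam m‖ := le_trans h1 h2
        _ ≤ L * (t * δ) := mul_le_mul_of_nonneg_left h3 hL.le
    have htδ : L * (t * δ) < ε / 2 := by
      have h5 : (t:ℝ) ≤ kbar := by exact_mod_cast htb.le
      have h7 : (L * kbar + 1) * δ = ε / 2 := by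
        rw [hδ]; field_simp
      have h6 : L * ((t:ℝ) * δ) ≤ L * (kbar * δ) := by
        apply mul_le_mul_of_nonneg_left _ hL.le
        exact mul_le_mul_of_nonneg_right h5 hδpos.le
      nlinarith [hδpos]
    rw [Real.dist_eq, sub_zero]
    have hsplit : g k i = g m i + (g k i - g m i) := by ring
    calc |g k i| = |g m i + (g k i - g m i)| := by rw [← hsplit]
      _ ≤ |g m i| + |g k i - g m i| := abs_add_le _ _
      _ < ε/2 + ε/2 := by
          have := lt_of_le_of_lt hgdiff htδ
          linarith
      _ = ε := by ring
  have habs : ∀ i : Fin n, Tendsto (fun k => |g k i|) atTop (nhds 0) := fun i => by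
    simpa using (hcoord i).abs
  have hsum : Tendsto (fun k => ∑ i, |g k i|) atTop (nhds 0) := by
    have := tendsto_finset_sum Finset.univ (fun i (_ : i ∈ Finset.univ) => habs i)
    simpa using this
  rw [tendsto_zero_iff_norm_tendsto_zero]
  exact squeeze_zero (fun k => norm_nonneg _) (fun k => norm_le_l1' (g k)) hsum
end

section
/- Under block-coordinate dual ascent with staleness: if F has L-Lipschitz gradient, each summand Fᵢ has Lᵢ-Lipschitz gradient with L̄ = maxᵢ Lᵢ, staleness is bounded by k̄ rounds, and the update uses stale gradients g̃^(k) with ‖∇F(λ^(k-1)) - g̃^(k)‖-terms bounded as in Corollary 2, then F(λ^(k)) ≤ F(λ^(0)) - (1/ρ - L/2 - 2k̄L̄)·∑_{k'≤k} ‖λ^(k') - λ^(k'-1)‖². -/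
open Finset
open scoped RealInnerProductSpace

variable {H : Type*} [NormedAddCommGroup H] [InnerProductSpace ℝ H] [CompleteSpace H]

lemma hasDerivAt_comp_line {F : H → ℝ} (hdiff : Differentiable ℝ F) (x d : H) (t : ℝ) :
    HasDerivAt (fun s : ℝ => F (x + s • d)) ⟪gradient F (x + t • d), d⟫ t := by
  have h1 : HasDerivAt (fun s : ℝ => x + s • d) d t := by
    simpa using ((hasDerivAt_id t).smul_const d).const_add x
  have h2 := ((hdiff (x + t • d)).hasGradientAt).hasFDerivAt
  have := h2.comp_hasDerivAt t h1
  simp [InnerProductSpace.toDual_apply_apply] at this ⊢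
  exact this

lemma descent_lemma {F : H → ℝ} {L : ℝ} (hdiff : Differentiable ℝ F)
    (hlip : ∀ x y, ‖gradient F x - gradient F y‖ ≤ L * ‖x - y‖) (x d : H) :
    F (x + d) ≤ F x + ⟪gradient F x, d⟫ + L / 2 * ‖d‖ ^ 2 := by
  set g : ℝ → ℝ := fun t => F (x + t • d) - t * ⟪gradient F x, d⟫ - L * t ^ 2 / 2 * ‖d‖ ^ 2
    with hg
  have hderiv : ∀ t : ℝ, HasDerivAt g
      (⟪gradient F (x + t • d), d⟫ - ⟪gradient F x, d⟫ - L * t * ‖d‖ ^ 2) t := by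
    intro t
    have h1 := hasDerivAt_comp_line hdiff x d t
    have h2 : HasDerivAt (fun t : ℝ => t * ⟪gradient F x, d⟫) ⟪gradient F x, d⟫ t := by
      simpa using (hasDerivAt_id t).mul_const _
    have h3 : HasDerivAt (fun t : ℝ => L * t ^ 2 / 2 * ‖d‖ ^ 2) (L * t * ‖d‖ ^ 2) t := by
      have : HasDerivAt (fun t : ℝ => t ^ 2) (2 * t) t := by
        simpa using hasDerivAt_pow 2 t
      have := ((this.const_mul L).div_const 2).mul_const (‖d‖ ^ 2)
      exact this.congr_deriv (by ring)
    exact (h1.sub h2).sub h3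
  have hmono : AntitoneOn g (Set.Icc (0:ℝ) 1) := by
    apply antitoneOn_of_deriv_nonpos (convex_Icc 0 1)
    · exact (Continuous.continuousOn (by
        have : Continuous g := by
          have : Differentiable ℝ g := fun t => (hderiv t).differentiableAt
          exact this.continuous
        exact this))
    · intro t ht
      exact ((hderiv t).differentiableAt).differentiableWithinAt
    · intro t ht
      rw [interior_Icc] at ht
      rw [(hderiv t).deriv]
      have hcs : ⟪gradient F (x + t • d) - gradient F x, d⟫ ≤
          ‖gradient F (x + t • d) - gradient F x‖ * ‖d‖ :=
        real_inner_le_norm _ _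
      have hl : ‖gradient F (x + t • d) - gradient F x‖ ≤ L * (t * ‖d‖) := by
        have := hlip (x + t • d) x
        simpa [norm_smul, abs_of_nonneg ht.1.le, mul_assoc] using this
      have hinner : ⟪gradient F (x + t • d), d⟫ - ⟪gradient F x, d⟫ ≤ L * t * ‖d‖ ^ 2 := by
        rw [← inner_sub_left]
        calc ⟪gradient F (x + t • d) - gradient F x, d⟫
            ≤ ‖gradient F (x + t • d) - gradient F x‖ * ‖d‖ := hcs
          _ ≤ L * (t * ‖d‖) * ‖d‖ := by
              apply mul_le_mul_of_nonneg_right hl (norm_nonneg d)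
          _ = L * t * ‖d‖ ^ 2 := by ring
      linarith
  have := hmono (Set.left_mem_Icc.2 zero_le_one) (Set.right_mem_Icc.2 zero_le_one) zero_le_one
  simp only [hg] at this
  simp only [zero_smul, add_zero, one_smul, zero_mul, sub_zero, zero_pow, one_pow,
    mul_zero, mul_one, zero_div, one_mul] at this
  linarith



section aux

lemma swap_bound (f : ℕ → ℝ) (hf : ∀ k, 0 ≤ f k) (kbar K : ℕ) :
    ∑ k ∈ range K, ∑ k' ∈ Ico (k - kbar) k, f k' ≤ (kbar : ℝ) * ∑ k ∈ range K, f k := by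
  have hsub : ∀ k ∈ range K, Ico (k - kbar) k ⊆ range K := by
    intro k hk k' hk'
    exact mem_range.2 (lt_of_lt_of_le (mem_Ico.1 hk').2 (le_of_lt (mem_range.1 hk)))
  have h1 : ∑ k ∈ range K, ∑ k' ∈ Ico (k - kbar) k, f k'
      = ∑ k ∈ range K, ∑ k' ∈ range K, if k' ∈ Ico (k - kbar) k then f k' else 0 := by
    refine Finset.sum_congr rfl fun k hk => ?_
    rw [Finset.sum_ite_mem, Finset.inter_eq_right.2 (hsub k hk)]
  rw [h1, Finset.sum_comm, Finset.mul_sum]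
  apply Finset.sum_le_sum
  intro k' _
  have h2 : (∑ k ∈ range K, if k' ∈ Ico (k - kbar) k then f k' else 0)
      = ((range K).filter (fun k => k' ∈ Ico (k - kbar) k)).card * f k' := by
    rw [← Finset.sum_filter, Finset.sum_const, nsmul_eq_mul]
  rw [h2]
  have hcard : ((range K).filter (fun k => k' ∈ Ico (k - kbar) k)).card ≤ kbar := by
    have hss : (range K).filter (fun k => k' ∈ Ico (k - kbar) k) ⊆ Ioc k' (k' + kbar) := by
      intro k hk
      obtain ⟨-, hk2⟩ := Finset.mem_filter.1 hk
      obtain ⟨hk3, hk4⟩ := mem_Ico.1 hk2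
      exact Finset.mem_Ioc.2 ⟨hk4, Nat.sub_le_iff_le_add.1 hk3⟩
    calc _ ≤ (Ioc k' (k' + kbar)).card := Finset.card_le_card hss
      _ = kbar := by rw [Nat.card_Ioc]; omega
  exact mul_le_mul_of_nonneg_right (by exact_mod_cast hcard) (hf k')

lemma cross_bound (a : ℕ → ℝ) (ha : ∀ k, 0 ≤ a k) (kbar : ℕ) (c : ℝ) (hc : 0 ≤ c) (K : ℕ) :
    ∑ k ∈ range K, (∑ k' ∈ Ico (k - kbar) k, 2 * c * a k') * a k
      ≤ 2 * (kbar : ℝ) * c * ∑ k ∈ range K, a k ^ 2 := by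
  have step1 : ∀ k, (∑ k' ∈ Ico (k - kbar) k, 2 * c * a k') * a k
      ≤ ∑ k' ∈ Ico (k - kbar) k, (c * a k' ^ 2 + c * a k ^ 2) := by
    intro k
    rw [Finset.sum_mul]
    apply Finset.sum_le_sum
    intro k' _
    nlinarith [ha k', ha k, sq_nonneg (a k' - a k)]
  calc ∑ k ∈ range K, (∑ k' ∈ Ico (k - kbar) k, 2 * c * a k') * a k
      ≤ ∑ k ∈ range K, ∑ k' ∈ Ico (k - kbar) k, (c * a k' ^ 2 + c * a k ^ 2) :=
        Finset.sum_le_sum fun k _ => step1 k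
    _ = (∑ k ∈ range K, ∑ k' ∈ Ico (k - kbar) k, c * a k' ^ 2)
        + ∑ k ∈ range K, ∑ k' ∈ Ico (k - kbar) k, c * a k ^ 2 := by
        rw [← Finset.sum_add_distrib]
        exact Finset.sum_congr rfl fun k _ => Finset.sum_add_distrib
    _ ≤ (kbar : ℝ) * ∑ k ∈ range K, c * a k ^ 2
        + ∑ k ∈ range K, (kbar : ℝ) * (c * a k ^ 2) := by
        gcongr ?_ + ?_
        · exact swap_bound (fun k => c * a k ^ 2) (fun k => by positivity) kbar K
        · apply Finset.sum_le_sum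
          intro k _
          rw [Finset.sum_const, nsmul_eq_mul]
          have hcard : ((Ico (k - kbar) k).card : ℝ) ≤ (kbar : ℝ) := by
            rw [Nat.card_Ico]
            have : k - (k - kbar) ≤ kbar := by omega
            exact_mod_cast this
          exact mul_le_mul_of_nonneg_right hcard (by positivity)
    _ = 2 * (kbar : ℝ) * c * ∑ k ∈ range K, a k ^ 2 := by
        simp only [Finset.mul_sum, ← Finset.sum_add_distrib]
        exact Finset.sum_congr rfl fun k _ => by ring

end aux



theorem stmt8 {n I : ℕ} (F : EuclideanSpace ℝ (Fin n) → ℝ)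
    (Fi : Fin I → EuclideanSpace ℝ (Fin n) → ℝ)
    (L : ℝ) (Li : Fin I → ℝ) (Lbar : ℝ) (ρ : ℝ) (kbar : ℕ)
    (hF : ∀ x, F x = ∑ i, Fi i x)
    (hdiff : Differentiable ℝ F) (hdiffi : ∀ i, Differentiable ℝ (Fi i))
    (hlip : ∀ x y, ‖gradient F x - gradient F y‖ ≤ L * ‖x - y‖)
    (hlipi : ∀ i x y, ‖gradient (Fi i) x - gradient (Fi i) y‖ ≤ Li i * ‖x - y‖)
    (hLbar : ∀ i, Li i ≤ Lbar)
    (hρ : 0 < ρ)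
    (lam gtil : ℕ → EuclideanSpace ℝ (Fin n))
    (hupd : ∀ k, lam (k + 1) = lam k - ρ • gtil (k + 1))
    (hstale : ∀ k, ‖gradient F (lam k) - gtil (k + 1)‖ ≤
      ∑ k' ∈ Finset.Ico (k - kbar) k, 2 * Lbar * ‖lam (k' + 1) - lam k'‖) :
    ∀ k, F (lam k) ≤ F (lam 0) -
      (1 / ρ - L / 2 - 2 * kbar * Lbar) *
        ∑ k' ∈ Finset.range k, ‖lam (k' + 1) - lam k'‖ ^ 2 := by
  set d : ℕ → EuclideanSpace ℝ (Fin n) := fun k => lam (k + 1) - lam k with hd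
  set e : ℕ → EuclideanSpace ℝ (Fin n) := fun k => gradient F (lam k) - gtil (k + 1) with he
  -- per-step inequality
  have step : ∀ k, F (lam (k + 1)) ≤ F (lam k) - (1 / ρ - L / 2) * ‖d k‖ ^ 2
      + ‖e k‖ * ‖d k‖ := by
    intro k
    have hdl := descent_lemma hdiff hlip (lam k) (d k)
    have hx : lam k + d k = lam (k + 1) := by simp [hd]
    rw [hx] at hdl
    have hg : gtil (k + 1) = ρ⁻¹ • (lam k - lam (k + 1)) := by
      have h2 : ρ • gtil (k + 1) = lam k - lam (k + 1) := by rw [hupd k]; abel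
      rw [← h2, smul_smul, inv_mul_cancel₀ hρ.ne', one_smul]
    have hinner : ⟪gradient F (lam k), d k⟫ = ⟪e k, d k⟫ - ρ⁻¹ * ‖d k‖ ^ 2 := by
      have : ⟪e k, d k⟫ = ⟪gradient F (lam k), d k⟫ - ⟪gtil (k + 1), d k⟫ := by
        simp [he, inner_sub_left]
      rw [this]
      have hgd : ⟪gtil (k + 1), d k⟫ = -(ρ⁻¹ * ‖d k‖ ^ 2) := by
        rw [hg, real_inner_smul_left]
        have h3 : lam k - lam (k + 1) = -(d k) := by simp [hd]
        rw [h3, inner_neg_left, real_inner_self_eq_norm_sq]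
        ring
      rw [hgd]; ring
    have hcs : ⟪e k, d k⟫ ≤ ‖e k‖ * ‖d k‖ := real_inner_le_norm _ _
    have hρ' : 1 / ρ = ρ⁻¹ := one_div ρ
    rw [hinner] at hdl
    nlinarith
  -- summed inequality
  have main : ∀ K, F (lam K) ≤ F (lam 0)
      - (1 / ρ - L / 2) * ∑ k ∈ range K, ‖d k‖ ^ 2
      + ∑ k ∈ range K, ‖e k‖ * ‖d k‖ := by
    intro K
    induction K with
    | zero => simp
    | succ K ih =>
      rw [Finset.sum_range_succ, Finset.sum_range_succ]
      have := step K
      nlinarith [this, ih]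
  intro K
  have hT : ∑ k ∈ range K, ‖e k‖ * ‖d k‖ ≤ 2 * (kbar : ℝ) * Lbar * ∑ k ∈ range K, ‖d k‖ ^ 2 := by
    by_cases hLb : 0 ≤ Lbar
    · calc ∑ k ∈ range K, ‖e k‖ * ‖d k‖
          ≤ ∑ k ∈ range K, (∑ k' ∈ Ico (k - kbar) k, 2 * Lbar * ‖d k'‖) * ‖d k‖ := by
            apply Finset.sum_le_sum
            intro k _
            exact mul_le_mul_of_nonneg_right (hstale k) (norm_nonneg _)
        _ ≤ 2 * (kbar : ℝ) * Lbar * ∑ k ∈ range K, ‖d k‖ ^ 2 :=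
            cross_bound (fun k => ‖d k‖) (fun k => norm_nonneg _) kbar Lbar hLb K
    · push_neg at hLb
      -- all error norms are zero
      have he0 : ∀ k, ‖e k‖ = 0 := by
        intro k
        have h1 := hstale k
        have h2 : ∑ k' ∈ Ico (k - kbar) k, 2 * Lbar * ‖d k'‖ ≤ 0 :=
          Finset.sum_nonpos fun k' _ => by nlinarith [norm_nonneg (d k')]
        have := norm_nonneg (e k)
        linarith
      rcases Nat.eq_zero_or_pos kbar with hk0 | hk1
      · simp [he0, hk0]
      · have hd0 : ∀ k, ‖d k‖ = 0 := by
          intro k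
          have h1 := hstale (k + 1)
          have hmem : k ∈ Ico (k + 1 - kbar) (k + 1) := by
            rw [mem_Ico]; omega
          have hsingle : ∑ k' ∈ Ico (k + 1 - kbar) (k + 1), 2 * Lbar * ‖d k'‖
              ≤ 2 * Lbar * ‖d k‖ := by
            have := Finset.single_le_sum
              (f := fun k' => -(2 * Lbar * ‖d k'‖))
              (fun i _ => by nlinarith [norm_nonneg (d i)]) hmem
            simp only [Finset.sum_neg_distrib] at this
            linarith
          have h0 : (0:ℝ) ≤ 2 * Lbar * ‖d k‖ := le_trans (norm_nonneg _) (h1.trans hsingle)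
          nlinarith [norm_nonneg (d k)]
        simp [he0, hd0]
  have := main K
  have hgoal : F (lam 0) - (1 / ρ - L / 2) * ∑ k ∈ range K, ‖d k‖ ^ 2
      + 2 * (kbar : ℝ) * Lbar * ∑ k ∈ range K, ‖d k‖ ^ 2
      = F (lam 0) - (1 / ρ - L / 2 - 2 * kbar * Lbar) * ∑ k ∈ range K, ‖d k‖ ^ 2 := by ring
  simp only [hd] at *
  linarith
end
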